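/- arXiv:2110.15625 — 4 statements merged into one kernel-verified Lean document; each statement's English description precedes it below -/
import Mathlib

section
/- Let μ be a σ-finite measure on a measurable sample space X, and let f₀, f₁ be probability densities with respect to μ (nonnegative, integrating to 1). Fix λ₀ > 0 and let R = {x : f₁ x ≥ λ₀ * f₀ x}. Then for any measurable set S with ∫_S f₀ dμ ≤ ∫_R f₀ dμ, we have ∫_S f₁ dμ ≤ ∫_R f₁ dμ. (Neyman–Pearson lemma: the likelihood-ratio region maximizes power among tests of no larger size.) -/
open MeasureTheory ENNReal NNReal

/-!
Split `S` and `R` along their common part `S ∩ R`. Since the size of `S` is finite, cancelling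
`S ∩ R` turns the size constraint into `∫_{S \ R} f₀ ≤ ∫_{R \ S} f₀`. On `S \ R` we have
`f₁ < λ₀ f₀` and on `R \ S` we have `λ₀ f₀ ≤ f₁`, hence
`∫_{S \ R} f₁ ≤ λ₀ ∫_{S \ R} f₀ ≤ λ₀ ∫_{R \ S} f₀ ≤ ∫_{R \ S} f₁`,
and adding back `∫_{S ∩ R} f₁` gives the claim.
-/

section

variable {X : Type*} [MeasurableSpace X] {μ : Measure X}

def likelihoodRegion (c : ℝ≥0∞) (f₀ f₁ : X → ℝ≥0∞) : Set X := {x | c * f₀ x ≤ f₁ x}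

lemma measurableSet_likelihoodRegion {f₀ f₁ : X → ℝ≥0∞} (hf₀ : Measurable f₀)
    (hf₁ : Measurable f₁) (c : ℝ≥0∞) : MeasurableSet (likelihoodRegion c f₀ f₁) :=
  measurableSet_le (measurable_const.mul hf₀) hf₁

lemma setLIntegral_diff_le_of_setLIntegral_le {f : X → ℝ≥0∞} {S R : Set X}
    (hS : MeasurableSet S) (hR : MeasurableSet R) (hfin : ∫⁻ x in S, f x ∂μ ≠ ∞)
    (h : ∫⁻ x in S, f x ∂μ ≤ ∫⁻ x in R, f x ∂μ) :
    ∫⁻ x in S \ R, f x ∂μ ≤ ∫⁻ x in R \ S, f x ∂μ := by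
  have hinter : ∫⁻ x in S ∩ R, f x ∂μ ≠ ∞ :=
    ne_top_of_le_ne_top hfin (lintegral_mono_set Set.inter_subset_left)
  rw [← lintegral_inter_add_sdiff f S hR, ← lintegral_inter_add_sdiff f R hS,
    Set.inter_comm R S] at h
  exact (ENNReal.add_le_add_iff_left hinter).mp h

lemma setLIntegral_le_of_setLIntegral_diff_le {f : X → ℝ≥0∞} {S R : Set X}
    (hS : MeasurableSet S) (hR : MeasurableSet R)
    (h : ∫⁻ x in S \ R, f x ∂μ ≤ ∫⁻ x in R \ S, f x ∂μ) :
    ∫⁻ x in S, f x ∂μ ≤ ∫⁻ x in R, f x ∂μ := by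
  rw [← lintegral_inter_add_sdiff f S hR, ← lintegral_inter_add_sdiff f R hS, Set.inter_comm R S]
  gcongr

lemma setLIntegral_le_const_mul_of_subset_compl_likelihoodRegion {f₀ f₁ : X → ℝ≥0∞}
    (hf₀ : Measurable f₀) {c : ℝ≥0∞} {A : Set X} (hA : MeasurableSet A)
    (hAR : A ⊆ (likelihoodRegion c f₀ f₁)ᶜ) :
    ∫⁻ x in A, f₁ x ∂μ ≤ c * ∫⁻ x in A, f₀ x ∂μ := by
  rw [← lintegral_const_mul c hf₀]
  exact setLIntegral_mono' hA fun _ hx => le_of_not_ge (hAR hx)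

lemma const_mul_setLIntegral_le_of_subset_likelihoodRegion {f₀ f₁ : X → ℝ≥0∞} {c : ℝ≥0∞}
    {B : Set X} (hB : MeasurableSet B) (hBR : B ⊆ likelihoodRegion c f₀ f₁) :
    c * ∫⁻ x in B, f₀ x ∂μ ≤ ∫⁻ x in B, f₁ x ∂μ :=
  (lintegral_const_mul_le c f₀).trans (setLIntegral_mono' hB fun _ hx => hBR hx)

theorem setLIntegral_le_setLIntegral_likelihoodRegion {f₀ f₁ : X → ℝ≥0∞} (hf₀ : Measurable f₀)
    (hf₁ : Measurable f₁) (c : ℝ≥0∞) {S : Set X} (hS : MeasurableSet S)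
    (hfin : ∫⁻ x in S, f₀ x ∂μ ≠ ∞)
    (hsize : ∫⁻ x in S, f₀ x ∂μ ≤ ∫⁻ x in likelihoodRegion c f₀ f₁, f₀ x ∂μ) :
    ∫⁻ x in S, f₁ x ∂μ ≤ ∫⁻ x in likelihoodRegion c f₀ f₁, f₁ x ∂μ := by
  set R := likelihoodRegion c f₀ f₁
  have hR : MeasurableSet R := measurableSet_likelihoodRegion hf₀ hf₁ c
  refine setLIntegral_le_of_setLIntegral_diff_le hS hR ?_
  calc ∫⁻ x in S \ R, f₁ x ∂μ
      ≤ c * ∫⁻ x in S \ R, f₀ x ∂μ :=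
        setLIntegral_le_const_mul_of_subset_compl_likelihoodRegion hf₀ (hS.diff hR)
          fun _ hx => hx.2
    _ ≤ c * ∫⁻ x in R \ S, f₀ x ∂μ := by
        gcongr c * ?_
        exact setLIntegral_diff_le_of_setLIntegral_le hS hR hfin hsize
    _ ≤ ∫⁻ x in R \ S, f₁ x ∂μ :=
        const_mul_setLIntegral_le_of_subset_likelihoodRegion (hR.diff hS) Set.sdiff_subset

end

theorem neyman_pearson_general
    {X : Type*} [MeasurableSpace X] (μ : Measure X)
    (f₀ f₁ : X → ℝ≥0∞) (hf₀ : Measurable f₀) (hf₁ : Measurable f₁)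
    (hf₀1 : ∫⁻ x, f₀ x ∂μ = 1)
    (lam₀ : ℝ≥0)
    (R : Set X) (hR : R = {x | (lam₀ : ℝ≥0∞) * f₀ x ≤ f₁ x})
    (S : Set X) (hS : MeasurableSet S)
    (hsize : ∫⁻ x in S, f₀ x ∂μ ≤ ∫⁻ x in R, f₀ x ∂μ) :
    ∫⁻ x in S, f₁ x ∂μ ≤ ∫⁻ x in R, f₁ x ∂μ := by
  have hfin : ∫⁻ x in S, f₀ x ∂μ ≠ ∞ :=
    ne_top_of_le_ne_top (by simp [hf₀1]) (setLIntegral_le_lintegral S f₀)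
  subst hR
  exact setLIntegral_le_setLIntegral_likelihoodRegion hf₀ hf₁ lam₀ hS hfin hsize

/-- Neyman–Pearson lemma: the likelihood-ratio region maximizes power
among tests of no larger size. -/
theorem neyman_pearson
    {X : Type*} [MeasurableSpace X] (μ : Measure X) [SigmaFinite μ]
    (f₀ f₁ : X → ℝ≥0∞) (hf₀ : Measurable f₀) (hf₁ : Measurable f₁)
    (hf₀1 : ∫⁻ x, f₀ x ∂μ = 1) (hf₁1 : ∫⁻ x, f₁ x ∂μ = 1)
    (lam₀ : ℝ≥0) (hlam : 0 < lam₀)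
    (R : Set X) (hR : R = {x | (lam₀ : ℝ≥0∞) * f₀ x ≤ f₁ x})
    (S : Set X) (hS : MeasurableSet S)
    (hsize : ∫⁻ x in S, f₀ x ∂μ ≤ ∫⁻ x in R, f₀ x ∂μ) :
    ∫⁻ x in S, f₁ x ∂μ ≤ ∫⁻ x in R, f₁ x ∂μ :=
  neyman_pearson_general μ f₀ f₁ hf₀ hf₁ hf₀1 lam₀ R hR S hS hsize
end

section
/- Suppose {p(·|θ)}_{θ∈ℝ} is a family of positive densities on ℝ with the monotone likelihood ratio property: for all θ > θ′ the map t ↦ p(t|θ)/p(t|θ′) is non-decreasing. Fix θ_C ∈ ℝ and probability measures ν₁ supported on (θ_C, ∞) and ν₀ supported on (−∞, θ_C]. Define B(t) = (∫ p(t|θ) dν₁(θ)) / (∫ p(t|θ) dν₀(θ)). Then B is non-decreasing: t′ ≥ t implies B(t′) ≥ B(t). -/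
open MeasureTheory ENNReal NNReal


private lemma my_div_le_div {a b c d : ℝ≥0∞} (hb0 : b ≠ 0) (hbt : b ≠ ⊤)
    (hd0 : d ≠ 0) (hdt : d ≠ ⊤) (h : a * d ≤ c * b) : a / b ≤ c / d := by
  rw [ENNReal.div_le_iff hb0 hbt, div_eq_mul_inv, mul_right_comm, ← div_eq_mul_inv,
    ENNReal.le_div_iff_mul_le (Or.inl hd0) (Or.inl hdt)]
  exact h

/-- Under the monotone likelihood ratio property, the Bayes factor of a prior
supported above `θC` against a prior supported at or below `θC` is a
non-decreasing function of the statistic. -/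
theorem bayes_factor_monotone_of_mlr
    (p : ℝ → ℝ → ℝ≥0∞) (hp : Measurable (Function.uncurry p))
    (hppos : ∀ θ t, 0 < p θ t) (hpfin : ∀ θ t, p θ t < ⊤)
    (hmlr : ∀ θ' θ t t', θ' < θ → t < t' → p θ t * p θ' t' ≤ p θ t' * p θ' t)
    (θC : ℝ)
    (ν₀ ν₁ : Measure ℝ) [IsProbabilityMeasure ν₀] [IsProbabilityMeasure ν₁]
    (hν₀ : ν₀ (Set.Iic θC)ᶜ = 0) (hν₁ : ν₁ (Set.Ioi θC)ᶜ = 0)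
    (hm₀ : ∀ t, 0 < ∫⁻ θ, p θ t ∂ν₀ ∧ ∫⁻ θ, p θ t ∂ν₀ < ⊤)
    (hm₁ : ∀ t, 0 < ∫⁻ θ, p θ t ∂ν₁ ∧ ∫⁻ θ, p θ t ∂ν₁ < ⊤)
    (B : ℝ → ℝ≥0∞) (hB : ∀ t, B t = (∫⁻ θ, p θ t ∂ν₁) / (∫⁻ θ, p θ t ∂ν₀)) :
    Monotone B := by
  have hmeas : ∀ t, Measurable fun θ => p θ t := fun t =>
    hp.comp (measurable_id.prodMk measurable_const)
  intro t t' htt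
  rcases htt.eq_or_lt with rfl | hlt
  · exact le_rfl
  rw [hB t, hB t']
  obtain ⟨h0p, h0f⟩ := hm₀ t
  obtain ⟨h0p', h0f'⟩ := hm₀ t'
  apply my_div_le_div h0p.ne' h0f.ne h0p'.ne' h0f'.ne
  rw [← lintegral_lintegral_mul (hmeas t).aemeasurable (hmeas t').aemeasurable,
      ← lintegral_lintegral_mul (hmeas t').aemeasurable (hmeas t).aemeasurable]
  apply lintegral_mono_ae
  filter_upwards [mem_ae_iff.mpr hν₁] with θ hθ
  apply lintegral_mono_ae
  filter_upwards [mem_ae_iff.mpr hν₀] with θ' hθ'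
  exact hmlr θ' θ t t' (lt_of_le_of_lt hθ' hθ) hlt
end

section
/- Under the MLR property (p(t′|θ) p(t|θ′) ≥ p(t|θ) p(t′|θ′) whenever t′ > t and θ > θ′), for any t′ > t, any θ_C, and any probability measures ν₁ on (θ_C, ∞) and ν₀ on (−∞, θ_C], the inequality (∫ p(t′|θ) dν₁)(∫ p(t|θ) dν₀) ≥ (∫ p(t|θ) dν₁)(∫ p(t′|θ) dν₀) holds. (Key product-integral inequality in the proof of the Karlin–Rubin theorem for Bayes factors.) -/
open MeasureTheory ENNReal NNReal

/-- Key product-integral inequality in the proof of the Karlin–Rubin theorem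
for Bayes factors. -/
theorem karlin_rubin_product_inequality
    (p : ℝ → ℝ → ℝ≥0∞) (hp : Measurable (Function.uncurry p))
    (hmlr : ∀ θ' θ t t', θ' < θ → t < t' → p θ t * p θ' t' ≤ p θ t' * p θ' t)
    (θC : ℝ)
    (ν₀ ν₁ : Measure ℝ) [IsProbabilityMeasure ν₀] [IsProbabilityMeasure ν₁]
    (hν₀ : ν₀ (Set.Iic θC)ᶜ = 0) (hν₁ : ν₁ (Set.Ioi θC)ᶜ = 0)
    (hfin₀ : ∀ t, ∫⁻ θ, p θ t ∂ν₀ < ⊤) (hfin₁ : ∀ t, ∫⁻ θ, p θ t ∂ν₁ < ⊤)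
    (t t' : ℝ) (htt : t < t') :
    (∫⁻ θ, p θ t' ∂ν₁) * (∫⁻ θ, p θ t ∂ν₀) ≥
      (∫⁻ θ, p θ t ∂ν₁) * (∫⁻ θ, p θ t' ∂ν₀) := by
  have hm : ∀ s : ℝ, Measurable fun θ => p θ s := fun s =>
    hp.comp (measurable_id.prodMk measurable_const)
  have h0 : ∀ᵐ θ' ∂ν₀, θ' ≤ θC := by
    rw [MeasureTheory.ae_iff]
    simpa [Set.Iic, Set.compl_setOf, not_le] using hν₀
  have h1 : ∀ᵐ θ ∂ν₁, θC < θ := by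
    rw [MeasureTheory.ae_iff]
    simpa [Set.Ioi, Set.compl_setOf, not_lt] using hν₁
  have key : ∫⁻ θ, (∫⁻ θ', p θ t * p θ' t' ∂ν₀) ∂ν₁ ≤
      ∫⁻ θ, (∫⁻ θ', p θ t' * p θ' t ∂ν₀) ∂ν₁ := by
    refine lintegral_mono_ae (h1.mono fun θ hθ => lintegral_mono_ae (h0.mono fun θ' hθ' => ?_))
    exact hmlr θ' θ t t' (lt_of_le_of_lt hθ' hθ) htt
  calc (∫⁻ θ, p θ t ∂ν₁) * (∫⁻ θ, p θ t' ∂ν₀)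
      = ∫⁻ θ, p θ t * (∫⁻ θ', p θ' t' ∂ν₀) ∂ν₁ := by
        rw [lintegral_mul_const _ (hm t)]
    _ = ∫⁻ θ, (∫⁻ θ', p θ t * p θ' t' ∂ν₀) ∂ν₁ := by
        simp_rw [lintegral_const_mul _ (hm t')]
    _ ≤ ∫⁻ θ, (∫⁻ θ', p θ t' * p θ' t ∂ν₀) ∂ν₁ := key
    _ = ∫⁻ θ, p θ t' * (∫⁻ θ', p θ' t ∂ν₀) ∂ν₁ := by
        simp_rw [lintegral_const_mul _ (hm t)]
    _ = (∫⁻ θ, p θ t' ∂ν₁) * (∫⁻ θ, p θ t ∂ν₀) := by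
        rw [lintegral_mul_const _ (hm t')]
end

section
/- Generalized Karlin–Rubin via Bayes factors: let {p(·|θ)} be a family of positive densities on ℝ, θ_C ∈ ℝ, ν₀ a probability measure on (−∞, θ_C]. Suppose that for every probability measure ν₁ on (θ_C, ∞), the Bayes factor B_{ν₁}(t) = (∫ p(t|θ)dν₁)/(∫ p(t|θ)dν₀) is non-decreasing in t. Then for any t₀, the region R = {t ≥ t₀} satisfies: for every θ₁ > θ_C and every measurable S with ∫_S (∫ p(t|θ)dν₀) dt ≤ ∫_R (∫ p(t|θ)dν₀) dt, one has ∫_S p(t|θ₁) dt ≤ ∫_R p(t|θ₁) dt. (The threshold test is uniformly most powerful among tests of no larger expected size, for every alternative parameter value.) -/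
open MeasureTheory ENNReal NNReal

/-!
Specialising the monotone Bayes factor hypothesis to the point mass at `θ₁` makes the likelihood
ratio `p θ₁ t / m₀ t` non-decreasing in `t`, where `m₀` is the null marginal density. With
`k = p θ₁ t₀ / m₀ t₀`, the region `R = {t ≥ t₀}` is then a Neyman–Pearson region:
`p θ₁ ≥ k m₀` on `R` and `p θ₁ ≤ k m₀` off `R`. Hence any `S` of no larger `m₀`-mass gains at
most `k` times the `m₀`-mass of `S \ R`, and loses at least `k` times the (larger) `m₀`-mass of
`R \ S`.
-/

section NeymanPearson

variable {α : Type*} [MeasurableSpace α] {μ : Measure α} {f g : α → ℝ≥0∞} {k : ℝ≥0∞}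
  {R S : Set α}

theorem lintegral_le_of_neymanPearson (hg : Measurable g) (hR : MeasurableSet R)
    (hS : MeasurableSet S) (hin : ∀ t ∈ R, k * g t ≤ f t)
    (hout : ∀ᵐ t ∂μ, t ∉ R → f t ≤ k * g t) (hfin : ∫⁻ t in S ∩ R, g t ∂μ ≠ ∞)
    (hsize : ∫⁻ t in S, g t ∂μ ≤ ∫⁻ t in R, g t ∂μ) :
    ∫⁻ t in S, f t ∂μ ≤ ∫⁻ t in R, f t ∂μ := by
  have hdiff : ∫⁻ t in S \ R, g t ∂μ ≤ ∫⁻ t in R \ S, g t ∂μ := by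
    rw [← lintegral_inter_add_sdiff g S hR, ← lintegral_inter_add_sdiff g R hS,
      Set.inter_comm R S] at hsize
    exact ENNReal.le_of_add_le_add_left hfin hsize
  calc ∫⁻ t in S, f t ∂μ = ∫⁻ t in S ∩ R, f t ∂μ + ∫⁻ t in S \ R, f t ∂μ :=
        (lintegral_inter_add_sdiff f S hR).symm
    _ ≤ ∫⁻ t in S ∩ R, f t ∂μ + ∫⁻ t in S \ R, k * g t ∂μ := by
        gcongr 1
        exact setLIntegral_mono_ae' (hS.diff hR) (hout.mono fun t hft ht => hft ht.2)
    _ = ∫⁻ t in S ∩ R, f t ∂μ + k * ∫⁻ t in S \ R, g t ∂μ := by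
        rw [lintegral_const_mul k hg]
    _ ≤ ∫⁻ t in S ∩ R, f t ∂μ + k * ∫⁻ t in R \ S, g t ∂μ := by gcongr
    _ = ∫⁻ t in S ∩ R, f t ∂μ + ∫⁻ t in R \ S, k * g t ∂μ := by
        rw [lintegral_const_mul k hg]
    _ ≤ ∫⁻ t in S ∩ R, f t ∂μ + ∫⁻ t in R \ S, f t ∂μ := by
        gcongr 1
        exact setLIntegral_mono' (hR.diff hS) fun t ht => hin t ht.1
    _ = ∫⁻ t in R, f t ∂μ := by
        rw [Set.inter_comm S R, lintegral_inter_add_sdiff f R hS]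

end NeymanPearson

section MonotoneRatio

variable {α : Type*} [Preorder α] {f g : α → ℝ≥0∞} {t₀ t : α}

theorem div_mul_le_of_monotone_div (hfg : Monotone fun t => f t / g t) (ht : t₀ ≤ t) :
    f t₀ / g t₀ * g t ≤ f t :=
  calc f t₀ / g t₀ * g t ≤ f t / g t * g t := mul_le_mul_left (hfg ht) _
    _ ≤ f t := by rw [mul_comm]; exact ENNReal.mul_div_le

theorem le_div_mul_of_monotone_div (hfg : Monotone fun t => f t / g t) (ht : t ≤ t₀)
    (hg₀ : g t ≠ 0) (hg : g t ≠ ∞) :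
    f t ≤ f t₀ / g t₀ * g t :=
  calc f t = f t / g t * g t := (ENNReal.div_mul_cancel hg₀ hg).symm
    _ ≤ f t₀ / g t₀ * g t := mul_le_mul_left (hfg ht) _

end MonotoneRatio

theorem lintegral_lintegral_eq_one_of_lintegral_eq_one {Θ T : Type*} [MeasurableSpace Θ]
    [MeasurableSpace T] {μ : Measure T} [SFinite μ] {ν : Measure Θ} [IsProbabilityMeasure ν]
    {p : Θ → T → ℝ≥0∞} (hp : Measurable (Function.uncurry p)) (hp1 : ∀ θ, ∫⁻ t, p θ t ∂μ = 1) :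
    ∫⁻ t, ∫⁻ θ, p θ t ∂ν ∂μ = 1 := by
  rw [← lintegral_lintegral_swap hp.aemeasurable]
  simp [hp1]

theorem generalized_karlin_rubin_general
    (p : ℝ → ℝ → ℝ≥0∞) (hp : Measurable (Function.uncurry p))
    (hppos : ∀ θ t, 0 < p θ t)
    (hp1 : ∀ θ, ∫⁻ t, p θ t = 1)
    (θC : ℝ) (ν₀ : Measure ℝ) [IsProbabilityMeasure ν₀]
    (hBmono : ∀ ν₁ : Measure ℝ, IsProbabilityMeasure ν₁ → ν₁ (Set.Ioi θC)ᶜ = 0 →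
      Monotone fun t => (∫⁻ θ, p θ t ∂ν₁) / (∫⁻ θ, p θ t ∂ν₀))
    (t₀ : ℝ) (θ₁ : ℝ) (hθ₁ : θC < θ₁)
    (S : Set ℝ) (hS : MeasurableSet S)
    (hsize : ∫⁻ t in S, (∫⁻ θ, p θ t ∂ν₀) ≤ ∫⁻ t in Set.Ici t₀, (∫⁻ θ, p θ t ∂ν₀)) :
    ∫⁻ t in S, p θ₁ t ≤ ∫⁻ t in Set.Ici t₀, p θ₁ t := by
  set m₀ : ℝ → ℝ≥0∞ := fun t => ∫⁻ θ, p θ t ∂ν₀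
  have hm₀ : Measurable m₀ := hp.lintegral_prod_left
  have hm₀_one : ∫⁻ t, m₀ t = 1 := lintegral_lintegral_eq_one_of_lintegral_eq_one hp hp1
  have hm₀_ne_zero : ∀ t, m₀ t ≠ 0 := fun t h => by
    have hae := (lintegral_eq_zero_iff (hp.comp measurable_prodMk_right)).1 h
    simpa [(hppos _ t).ne'] using hae.exists
  have hratio : Monotone fun t => p θ₁ t / m₀ t := by
    simpa using hBmono (Measure.dirac θ₁) inferInstance (by simp [hθ₁])
  refine lintegral_le_of_neymanPearson (k := p θ₁ t₀ / m₀ t₀) hm₀ measurableSet_Ici hS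
    (fun t ht => div_mul_le_of_monotone_div hratio ht) ?_ ?_ hsize
  · filter_upwards [ae_lt_top hm₀ (by simp [hm₀_one])] with t hfin ht
    exact le_div_mul_of_monotone_div hratio (not_le.mp ht).le (hm₀_ne_zero t) hfin.ne
  · exact ne_top_of_le_ne_top one_ne_top (hm₀_one ▸ setLIntegral_le_lintegral _ _)

/-- Generalized Karlin–Rubin via Bayes factors: if every Bayes factor against
the fixed null prior is non-decreasing, the threshold test is uniformly most
powerful among tests of no larger expected size, for every alternative
parameter value. -/
theorem generalized_karlin_rubin
    (p : ℝ → ℝ → ℝ≥0∞) (hp : Measurable (Function.uncurry p))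
    (hppos : ∀ θ t, 0 < p θ t) (hpfin : ∀ θ t, p θ t < ⊤)
    (hp1 : ∀ θ, ∫⁻ t, p θ t = 1)
    (θC : ℝ) (ν₀ : Measure ℝ) [IsProbabilityMeasure ν₀]
    (hν₀ : ν₀ (Set.Iic θC)ᶜ = 0)
    (hBmono : ∀ ν₁ : Measure ℝ, IsProbabilityMeasure ν₁ → ν₁ (Set.Ioi θC)ᶜ = 0 →
      Monotone fun t => (∫⁻ θ, p θ t ∂ν₁) / (∫⁻ θ, p θ t ∂ν₀))
    (t₀ : ℝ) (θ₁ : ℝ) (hθ₁ : θC < θ₁)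
    (S : Set ℝ) (hS : MeasurableSet S)
    (hsize : ∫⁻ t in S, (∫⁻ θ, p θ t ∂ν₀) ≤ ∫⁻ t in Set.Ici t₀, (∫⁻ θ, p θ t ∂ν₀)) :
    ∫⁻ t in S, p θ₁ t ≤ ∫⁻ t in Set.Ici t₀, p θ₁ t :=
  generalized_karlin_rubin_general p hp hppos hp1 θC ν₀ hBmono t₀ θ₁ hθ₁ S hS hsize
end
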